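/- arXiv:1404.0788 — 5 statements merged into one kernel-verified Lean document; each statement's English description precedes it below -/
import Mathlib

section
/- Let M, R₀ be positive integers, t > 0, D an invertible real diagonal R₀×R₀ matrix with diagonal entries d_1, …, d_{R₀} satisfying d_i ≠ 0 and 1 + t d_i > 0, V a real M×R₀ matrix with Vᵀ V = I_{R₀}, Σ := I_M + t V D Vᵀ, H a real symmetric M×M matrix, and Q := Σ^{1/2} H Σ^{1/2}. For μ ∈ ℝ not an eigenvalue of H, set G(μ) := (H − μ I_M)^{-1} and W(μ) := t · Vᵀ (I_M + μ G(μ)) V. Then μ is an eigenvalue of Q if and only if det(D^{-1} + W(μ)) = 0. -/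
open Matrix

noncomputable section

/-- Eigenvalues of the multiplicatively deformed matrix `Q = Σ^{1/2} H Σ^{1/2}` away from the
spectrum of `H` are characterized by the determinant equation `det(D⁻¹ + W(μ)) = 0`, where
`W(μ) = t · Vᵀ (1 + μ (H - μ)⁻¹) V`. -/
theorem stmt10 (M R₀ : ℕ) (hM : 0 < M) (hR₀ : 0 < R₀)
    (t : ℝ) (ht : 0 < t)
    (d : Fin R₀ → ℝ) (hd0 : ∀ i, d i ≠ 0) (hd1 : ∀ i, 0 < 1 + t * d i)
    (V : Matrix (Fin M) (Fin R₀) ℝ) (hV : Vᵀ * V = 1)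
    (H : Matrix (Fin M) (Fin M) ℝ) (hH : H.IsHermitian)
    (Sq : Matrix (Fin M) (Fin M) ℝ) (hSqpsd : Sq.PosSemidef)
    (hSq : Sq * Sq = 1 + t • (V * Matrix.diagonal d * Vᵀ))
    (μ : ℝ) (hμ : μ ∉ spectrum ℝ H) :
    μ ∈ spectrum ℝ (Sq * H * Sq) ↔
      ((Matrix.diagonal d)⁻¹ +
        t • (Vᵀ * (1 + μ • (H - μ • (1 : Matrix (Fin M) (Fin M) ℝ))⁻¹) * V)).det = 0 := by
  classical
  set D : Matrix (Fin R₀) (Fin R₀) ℝ := Matrix.diagonal d with hDdef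
  set A : Matrix (Fin M) (Fin M) ℝ := H - μ • (1 : Matrix (Fin M) (Fin M) ℝ) with hAdef
  set G : Matrix (Fin M) (Fin M) ℝ := A⁻¹ with hGdef
  -- determinant of A is nonzero
  have hUnit : IsUnit (μ • (1 : Matrix (Fin M) (Fin M) ℝ) - H) := by
    have := spectrum.notMem_iff.mp hμ
    rwa [Algebra.algebraMap_eq_smul_one] at this
  have hdetμH : (μ • (1 : Matrix (Fin M) (Fin M) ℝ) - H).det ≠ 0 :=
    isUnit_iff_ne_zero.mp ((Matrix.isUnit_iff_isUnit_det _).mp hUnit)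
  have hdetA : A.det ≠ 0 := by
    have hne : A = -(μ • (1 : Matrix (Fin M) (Fin M) ℝ) - H) := by rw [hAdef]; abel
    rw [hne, Matrix.det_neg]
    simp only [ne_eq, mul_eq_zero, not_or]
    exact ⟨by positivity, hdetμH⟩
  have hAunit : IsUnit A.det := isUnit_iff_ne_zero.mpr hdetA
  have hAG : A * G = 1 := Matrix.mul_nonsing_inv _ hAunit
  -- H * G = 1 + μ • G
  have hHG : H * G = 1 + μ • G := by
    have hA1 : A + μ • (1 : Matrix (Fin M) (Fin M) ℝ) = H := by rw [hAdef]; abel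
    calc H * G = (A + μ • (1 : Matrix (Fin M) (Fin M) ℝ)) * G := by rw [hA1]
      _ = 1 + μ • G := by rw [add_mul, hAG, Matrix.smul_mul, one_mul]
  -- determinant of D
  have hdetD : D.det ≠ 0 := by
    rw [hDdef, Matrix.det_diagonal]
    exact Finset.prod_ne_zero_iff.mpr fun i _ => hd0 i
  have hDinv : D⁻¹ * D = 1 := Matrix.nonsing_inv_mul _ (isUnit_iff_ne_zero.mpr hdetD)
  -- determinant of Σ and Sq
  have hdetSig : ((1 : Matrix (Fin M) (Fin M) ℝ) + t • (V * D * Vᵀ)).det ≠ 0 := by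
    have h1 : (1 : Matrix (Fin M) (Fin M) ℝ) + t • (V * D * Vᵀ)
        = 1 + V * (t • (D * Vᵀ)) := by
      simp only [Matrix.mul_smul, Matrix.smul_mul, mul_assoc, Matrix.mul_assoc]
    rw [h1, Matrix.det_one_add_mul_comm]
    have h2 : (t • (D * Vᵀ)) * V = t • D := by
      rw [Matrix.smul_mul, Matrix.mul_assoc, hV, Matrix.mul_one]
    rw [h2, hDdef, ← Matrix.diagonal_one, ← Matrix.diagonal_smul, Matrix.diagonal_add,
      Matrix.det_diagonal]
    refine Finset.prod_ne_zero_iff.mpr fun i _ => ?_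
    simpa using (hd1 i).ne'
  have hdetSq : Sq.det ≠ 0 := by
    intro h
    apply hdetSig
    rw [← hSq, Matrix.det_mul, h, zero_mul]
  -- key determinant identity
  have hswap : Sq * (μ • (1 : Matrix (Fin M) (Fin M) ℝ) - Sq * H * Sq)
      = (μ • (1 : Matrix (Fin M) (Fin M) ℝ) - Sq * Sq * H) * Sq := by
    rw [mul_sub, sub_mul, Matrix.mul_smul, Matrix.smul_mul, mul_one, one_mul]
    simp only [mul_assoc]
  have hdet1 : (μ • (1 : Matrix (Fin M) (Fin M) ℝ) - Sq * H * Sq).det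
      = (μ • (1 : Matrix (Fin M) (Fin M) ℝ) - Sq * Sq * H).det := by
    have h := congrArg Matrix.det hswap
    rw [Matrix.det_mul, Matrix.det_mul] at h
    exact mul_left_cancel₀ hdetSq (by rw [h, mul_comm])
  -- rewrite μ•1 - ΣH as -(A * (1 + G * (t • (V * (D * (Vᵀ * H))))))
  have h2 : μ • (1 : Matrix (Fin M) (Fin M) ℝ) - (1 + t • (V * D * Vᵀ)) * H
      = -(A * (1 + G * (t • (V * (D * (Vᵀ * H)))))) := by
    rw [mul_add, mul_one, ← mul_assoc, hAG, one_mul, hAdef]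
    simp only [add_mul, one_mul, Matrix.smul_mul, Matrix.mul_smul, mul_assoc, Matrix.mul_assoc]
    abel
  -- chain of determinant equalities
  have h3 : ((1 : Matrix (Fin M) (Fin M) ℝ) + G * (t • (V * (D * (Vᵀ * H))))).det
      = ((1 : Matrix (Fin R₀) (Fin R₀) ℝ)
          + (t • (Vᵀ * (1 + μ • G) * V)) * D).det := by
    have e1 : G * (t • (V * (D * (Vᵀ * H)))) = (G * (t • (V * D))) * (Vᵀ * H) := by
      simp only [Matrix.mul_smul, Matrix.smul_mul, mul_assoc, Matrix.mul_assoc]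
    rw [e1, Matrix.det_one_add_mul_comm]
    congr 2
    calc (Vᵀ * H) * (G * (t • (V * D)))
        = t • (Vᵀ * ((H * G) * (V * D))) := by
          simp only [Matrix.mul_smul, Matrix.smul_mul, mul_assoc, Matrix.mul_assoc]
      _ = (t • (Vᵀ * (1 + μ • G) * V)) * D := by
          rw [hHG]
          simp only [Matrix.mul_smul, Matrix.smul_mul, mul_assoc, Matrix.mul_assoc]
  have h4 : ((1 : Matrix (Fin R₀) (Fin R₀) ℝ) + (t • (Vᵀ * (1 + μ • G) * V)) * D).det
      = (D⁻¹ + t • (Vᵀ * (1 + μ • G) * V)).det * D.det := by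
    rw [← Matrix.det_mul, add_mul, hDinv]
  -- assemble
  have hmain : (μ • (1 : Matrix (Fin M) (Fin M) ℝ) - Sq * H * Sq).det
      = ((-1 : ℝ) ^ M * A.det * D.det)
        * (D⁻¹ + t • (Vᵀ * (1 + μ • G) * V)).det := by
    rw [hdet1, hSq, h2, Matrix.det_neg, Matrix.det_mul, h3, h4]
    simp only [Fintype.card_fin]
    ring
  rw [spectrum.mem_iff, Algebra.algebraMap_eq_smul_one, Matrix.isUnit_iff_isUnit_det,
    isUnit_iff_ne_zero, not_not, hmain]
  have hc : ((-1 : ℝ) ^ M * A.det * D.det) ≠ 0 := by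
    refine mul_ne_zero (mul_ne_zero ?_ hdetA) hdetD
    positivity
  constructor
  · intro h
    rcases mul_eq_zero.mp h with h | h
    · exact absurd h hc
    · exact h
  · intro h
    rw [h, mul_zero]
end
end

section
/- Let M, R₀ be positive integers, t > 0, D an invertible real diagonal R₀×R₀ matrix with diagonal entries d_1, …, d_{R₀} satisfying d_i ≠ 0 and 1 + t d_i > 0, V a real M×R₀ matrix with Vᵀ V = I_{R₀}, Σ := I_M + t V D Vᵀ, H a real symmetric M×M matrix, and Q := Σ^{1/2} H Σ^{1/2}. Let z ∈ ℂ be such that z is not an eigenvalue of H, z is not an eigenvalue of Q, and the matrix D^{-1} + W(z) is invertible, where G(z) := (H − z I_M)^{-1} and W(z) := t · Vᵀ (I_M + z G(z)) V. Then Σ^{1/2} (Q − z I_M)^{-1} Σ^{1/2} = G(z) − G(z) V · (t z) (D^{-1} + W(z))^{-1} · Vᵀ G(z). -/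
open Matrix

noncomputable section

/-- Entrywise coercion of a real matrix to a complex matrix. -/
def cmat {m n : ℕ} (A : Matrix (Fin m) (Fin n) ℝ) : Matrix (Fin m) (Fin n) ℂ :=
  A.map (fun x => (x : ℂ))

lemma cmat_mul {m n p : ℕ} (A : Matrix (Fin m) (Fin n) ℝ) (B : Matrix (Fin n) (Fin p) ℝ) :
    cmat (A * B) = cmat A * cmat B := by
  ext i j
  simp [cmat, Matrix.mul_apply]

lemma cmat_transpose {m n : ℕ} (A : Matrix (Fin m) (Fin n) ℝ) :
    cmat Aᵀ = (cmat A)ᵀ := rfl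

lemma cmat_one {m : ℕ} : cmat (1 : Matrix (Fin m) (Fin m) ℝ) = 1 := by
  ext i j
  simp [cmat, Matrix.one_apply, apply_ite (fun x : ℝ => (x : ℂ))]

lemma cmat_add {m n : ℕ} (A B : Matrix (Fin m) (Fin n) ℝ) :
    cmat (A + B) = cmat A + cmat B := by
  ext i j; simp [cmat]

lemma cmat_smul {m n : ℕ} (t : ℝ) (A : Matrix (Fin m) (Fin n) ℝ) :
    cmat (t • A) = (t : ℂ) • cmat A := by
  ext i j; simp [cmat]

lemma cmat_diagonal {m : ℕ} (v : Fin m → ℝ) :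
    cmat (Matrix.diagonal v) = Matrix.diagonal (fun i => (v i : ℂ)) := by
  ext i j
  simp [cmat, Matrix.diagonal, apply_ite (fun x : ℝ => (x : ℂ))]

/-- Resolvent identity: `Σ^{1/2} (Q - z)⁻¹ Σ^{1/2} = G(z) - G(z) V (tz) (D⁻¹ + W(z))⁻¹ Vᵀ G(z)`,
where `Q = Σ^{1/2} H Σ^{1/2}`, `G(z) = (H - z)⁻¹` and `W(z) = t Vᵀ (1 + z G(z)) V`. -/
theorem stmt11 (M R₀ : ℕ) (hM : 0 < M) (hR₀ : 0 < R₀)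
    (t : ℝ) (ht : 0 < t)
    (d : Fin R₀ → ℝ) (hd0 : ∀ i, d i ≠ 0) (hd1 : ∀ i, 0 < 1 + t * d i)
    (V : Matrix (Fin M) (Fin R₀) ℝ) (hV : Vᵀ * V = 1)
    (H : Matrix (Fin M) (Fin M) ℝ) (hH : H.IsHermitian)
    (Sq : Matrix (Fin M) (Fin M) ℝ) (hSqpsd : Sq.PosSemidef)
    (hSq : Sq * Sq = 1 + t • (V * Matrix.diagonal d * Vᵀ))
    (z : ℂ) (hzH : z ∉ spectrum ℂ (cmat H)) (hzQ : z ∉ spectrum ℂ (cmat (Sq * H * Sq)))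
    (hDW : ((Matrix.diagonal fun i => (d i : ℂ))⁻¹ +
      (t : ℂ) • ((cmat V)ᵀ * (1 + z • (cmat H - z • 1)⁻¹) * cmat V)).det ≠ 0) :
    cmat Sq * (cmat (Sq * H * Sq) - z • 1)⁻¹ * cmat Sq =
      (cmat H - z • 1)⁻¹ -
        (cmat H - z • 1)⁻¹ * cmat V *
          (((t : ℂ) * z) •
            ((Matrix.diagonal fun i => (d i : ℂ))⁻¹ +
              (t : ℂ) • ((cmat V)ᵀ * (1 + z • (cmat H - z • 1)⁻¹) * cmat V))⁻¹) *
          (cmat V)ᵀ * (cmat H - z • 1)⁻¹ := by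
  classical
  -- scalar facts
  have htne : (t : ℂ) ≠ 0 := Complex.ofReal_ne_zero.mpr ht.ne'
  have hdne : ∀ i, (d i : ℂ) ≠ 0 := fun i => Complex.ofReal_ne_zero.mpr (hd0 i)
  have h1td : ∀ i, (1 : ℂ) + (t : ℂ) * (d i : ℂ) ≠ 0 := by
    intro i
    have h : ((1 + t * d i : ℝ) : ℂ) ≠ 0 := Complex.ofReal_ne_zero.mpr (hd1 i).ne'
    push_cast at h
    exact h
  set Vc := cmat V with hVcdef
  set Hc := cmat H with hHcdef
  set Sc := cmat Sq with hScdef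
  set Qc := cmat (Sq * H * Sq) with hQcdef
  set Dc : Matrix (Fin R₀) (Fin R₀) ℂ := Matrix.diagonal (fun i => (d i : ℂ)) with hDcdef
  set A := Hc - z • (1 : Matrix (Fin M) (Fin M) ℂ) with hAdef
  set G := A⁻¹ with hGdef
  set K := Dc⁻¹ + (t : ℂ) • (Vcᵀ * (1 + z • G) * Vc) with hKdef
  set N : Matrix (Fin R₀) (Fin R₀) ℂ :=
    Matrix.diagonal (fun i => (t : ℂ) * (d i : ℂ) / (1 + (t : ℂ) * (d i : ℂ))) with hNdef
  -- transported hypotheses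
  have hVV : Vcᵀ * Vc = 1 := by
    rw [hVcdef, ← cmat_transpose, ← cmat_mul, hV, cmat_one]
  have hVV' : ∀ (p : ℕ) (X : Matrix (Fin R₀) (Fin p) ℂ), Vcᵀ * (Vc * X) = X := by
    intro p X; rw [← Matrix.mul_assoc, hVV, Matrix.one_mul]
  have hS2 : Sc * Sc = 1 + (t : ℂ) • (Vc * Dc * Vcᵀ) := by
    rw [hScdef, ← cmat_mul, hSq, cmat_add, cmat_one, cmat_smul, cmat_mul, cmat_mul,
      cmat_transpose, cmat_diagonal, hDcdef, hVcdef]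
  -- diagonal facts
  have hDinv : Dc⁻¹ = Matrix.diagonal (fun i => ((d i : ℂ))⁻¹) := by
    apply Matrix.inv_eq_right_inv
    rw [hDcdef, Matrix.diagonal_mul_diagonal]
    rw [show (fun i => (d i : ℂ) * ((d i : ℂ))⁻¹) = fun _ => (1 : ℂ) from
      funext fun i => mul_inv_cancel₀ (hdne i), Matrix.diagonal_one]
  have hDN : (t : ℂ) • Dc = N + (t : ℂ) • (Dc * N) := by
    rw [hDcdef, hNdef, Matrix.diagonal_mul_diagonal]
    ext i j
    rcases eq_or_ne i j with rfl | hij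
    · simp only [Matrix.smul_apply, Matrix.add_apply, Matrix.diagonal_apply_eq, smul_eq_mul]
      have h1 := h1td i
      have h2 := hdne i
      field_simp
    · simp [Matrix.diagonal_apply_ne _ hij]
  have hND : N * Dc⁻¹ + (t : ℂ) • N = (t : ℂ) • (1 : Matrix (Fin R₀) (Fin R₀) ℂ) := by
    rw [hDinv, hNdef, Matrix.diagonal_mul_diagonal]
    ext i j
    rcases eq_or_ne i j with rfl | hij
    · simp only [Matrix.smul_apply, Matrix.add_apply, Matrix.diagonal_apply_eq, smul_eq_mul,
        Matrix.one_apply_eq, mul_one]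
      have h1 := h1td i
      have h2 := hdne i
      have h3 : (t : ℂ) * (d i : ℂ) ^ 2 + (d i : ℂ) ≠ 0 := by
        intro hc
        exact mul_ne_zero h2 h1 (by linear_combination hc)
      field_simp
    · simp [Matrix.diagonal_apply_ne _ hij, Matrix.one_apply_ne hij]
  have hNDcomm : N * Dc = Dc * N := by
    rw [hDcdef, hNdef, Matrix.diagonal_mul_diagonal, Matrix.diagonal_mul_diagonal]
    ext i j
    rcases eq_or_ne i j with rfl | hij
    · simp only [Matrix.diagonal_apply_eq]
      ring
    · simp [Matrix.diagonal_apply_ne _ hij]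
  -- sandwich multiplication
  have key : ∀ (P Q : Matrix (Fin R₀) (Fin R₀) ℂ),
      (Vc * P * Vcᵀ) * (Vc * Q * Vcᵀ) = Vc * (P * Q) * Vcᵀ := by
    intro P Q
    simp only [Matrix.mul_assoc]
    rw [hVV' _ (Q * Vcᵀ)]
  -- inverse of Σ
  have hXY : (t : ℂ) • (Vc * Dc * Vcᵀ) = Vc * N * Vcᵀ + (t : ℂ) • (Vc * (Dc * N) * Vcᵀ) := by
    have h := congrArg (fun P => Vc * P * Vcᵀ) hDN
    simpa [Matrix.mul_add, Matrix.add_mul, mul_smul_comm, smul_mul_assoc] using h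
  have hSig1 : (1 + (t : ℂ) • (Vc * Dc * Vcᵀ)) * (1 - Vc * N * Vcᵀ) = 1 := by
    have h1 : (t : ℂ) • (Vc * Dc * Vcᵀ) * (Vc * N * Vcᵀ) = (t : ℂ) • (Vc * (Dc * N) * Vcᵀ) := by
      rw [smul_mul_assoc, key]
    calc (1 + (t : ℂ) • (Vc * Dc * Vcᵀ)) * (1 - Vc * N * Vcᵀ)
        = 1 - Vc * N * Vcᵀ + ((t : ℂ) • (Vc * Dc * Vcᵀ)
            - (t : ℂ) • (Vc * Dc * Vcᵀ) * (Vc * N * Vcᵀ)) := by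
          simp only [Matrix.mul_sub, Matrix.add_mul, Matrix.one_mul, Matrix.mul_one]
          abel
      _ = 1 := by rw [h1, hXY]; abel
  have hScSc1 : (Sc * Sc) * (1 - Vc * N * Vcᵀ) = 1 := by rw [hS2]; exact hSig1
  have hScInv : Invertible Sc :=
    invertibleOfRightInverse Sc (Sc * (1 - Vc * N * Vcᵀ))
      (by rw [← Matrix.mul_assoc]; exact hScSc1)
  -- invertibility of A, Qc - z, K
  have hAinv : Invertible A := by
    have h := spectrum.notMem_iff.mp hzH
    rw [Algebra.algebraMap_eq_smul_one] at h
    have h2 : IsUnit A := by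
      have := h.neg
      rw [neg_sub] at this
      exact this
    exact h2.invertible
  have hQinv : Invertible (Qc - z • (1 : Matrix (Fin M) (Fin M) ℂ)) := by
    have h := spectrum.notMem_iff.mp hzQ
    rw [Algebra.algebraMap_eq_smul_one] at h
    have h2 : IsUnit (Qc - z • (1 : Matrix (Fin M) (Fin M) ℂ)) := by
      have := h.neg
      rw [neg_sub] at this
      exact this
    exact h2.invertible
  have hKinv : Invertible K := Matrix.invertibleOfIsUnitDet K (isUnit_iff_ne_zero.mpr hDW)
  have hAG : A * G = 1 := Matrix.mul_inv_of_invertible A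
  have hAG' : ∀ X : Matrix (Fin M) (Fin M) ℂ, A * (G * X) = X := by
    intro X; rw [← Matrix.mul_assoc, hAG, Matrix.one_mul]
  -- K expanded
  have hK' : K = Dc⁻¹ + ((t : ℂ) • (1 : Matrix (Fin R₀) (Fin R₀) ℂ)
      + ((t : ℂ) * z) • (Vcᵀ * G * Vc)) := by
    rw [hKdef]
    congr 1
    simp only [Matrix.mul_add, Matrix.add_mul, Matrix.mul_one, Matrix.mul_smul,
      Matrix.smul_mul, hVV, smul_add, smul_smul]
  have hNK : N * K = (t : ℂ) • (1 : Matrix (Fin R₀) (Fin R₀) ℂ)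
      + ((t : ℂ) * z) • (N * (Vcᵀ * G * Vc)) := by
    rw [hK', Matrix.mul_add, Matrix.mul_add, mul_smul_comm, mul_smul_comm, Matrix.mul_one,
      ← add_assoc, hND]
  -- the bracket
  set Br := z • N - ((t : ℂ) * z) • K⁻¹
      - ((t : ℂ) * z * z) • (N * (Vcᵀ * G * Vc) * K⁻¹) with hBrdef
  have e1 : (N * (Vcᵀ * G * Vc) * K⁻¹) * K = N * (Vcᵀ * G * Vc) := by
    rw [Matrix.mul_assoc, Matrix.inv_mul_of_invertible, Matrix.mul_one]
  have hBrK : Br * K = 0 := by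
    rw [hBrdef, Matrix.sub_mul, Matrix.sub_mul, Matrix.smul_mul, Matrix.smul_mul,
      Matrix.smul_mul, e1, hNK, Matrix.inv_mul_of_invertible]
    module
  have hBr : Br = 0 := by
    calc Br = Br * (K * K⁻¹) := by rw [Matrix.mul_inv_of_invertible, Matrix.mul_one]
      _ = (Br * K) * K⁻¹ := by rw [Matrix.mul_assoc]
      _ = 0 := by rw [hBrK, Matrix.zero_mul]
  -- core identity
  have hzero : Vc * Br * (Vcᵀ * G) = 0 := by
    rw [hBr, Matrix.mul_zero, Matrix.zero_mul]
  have hmain : (A + z • (Vc * N * Vcᵀ)) *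
      (G - G * Vc * (((t : ℂ) * z) • K⁻¹) * Vcᵀ * G) = 1 + Vc * Br * (Vcᵀ * G) := by
    rw [hBrdef]
    simp only [Matrix.mul_sub, Matrix.sub_mul, Matrix.mul_add, Matrix.add_mul,
      Matrix.smul_mul, Matrix.mul_smul, smul_smul, smul_sub, sub_smul, smul_add, add_smul,
      Matrix.one_mul, Matrix.mul_one, hAG, hAG', Matrix.mul_assoc]
    module
  have hmain1 : (A + z • (Vc * N * Vcᵀ)) *
      (G - G * Vc * (((t : ℂ) * z) • K⁻¹) * Vcᵀ * G) = 1 := by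
    rw [hmain, hzero, add_zero]
  -- Q - z = S (A + z V N Vᵀ) S
  have hSS : Sc * (1 - Vc * N * Vcᵀ) * Sc = 1 := by
    have hinv2 : (1 - Vc * N * Vcᵀ) = (Sc * Sc)⁻¹ := (Matrix.inv_eq_right_inv hScSc1).symm
    rw [hinv2, Matrix.mul_inv_rev]
    simp only [Matrix.mul_assoc, Matrix.inv_mul_of_invertible, Matrix.mul_one,
      Matrix.mul_inv_of_invertible]
  have hQ : Qc = Sc * Hc * Sc := by
    rw [hQcdef, hScdef, hHcdef, cmat_mul, cmat_mul]
  have hQz' : Qc - z • (1 : Matrix (Fin M) (Fin M) ℂ)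
      = Sc * (A + z • (Vc * N * Vcᵀ)) * Sc := by
    have hA' : A + z • (Vc * N * Vcᵀ) = Hc - z • (1 - Vc * N * Vcᵀ) := by
      rw [hAdef, smul_sub]; abel
    rw [hA', hQ]
    have hexp : Sc * (Hc - z • (1 - Vc * N * Vcᵀ)) * Sc
        = Sc * Hc * Sc - z • (Sc * (1 - Vc * N * Vcᵀ) * Sc) := by
      rw [Matrix.mul_sub, mul_smul_comm, Matrix.sub_mul, smul_mul_assoc]
    rw [hexp, hSS]
  -- conclude
  have h1 : (Qc - z • (1 : Matrix (Fin M) (Fin M) ℂ)) *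
      (Sc⁻¹ * ((G - G * Vc * (((t : ℂ) * z) • K⁻¹) * Vcᵀ * G) * Sc⁻¹)) = 1 := by
    rw [hQz']
    calc Sc * (A + z • (Vc * N * Vcᵀ)) * Sc *
          (Sc⁻¹ * ((G - G * Vc * (((t : ℂ) * z) • K⁻¹) * Vcᵀ * G) * Sc⁻¹))
        = Sc * ((A + z • (Vc * N * Vcᵀ)) * ((Sc * Sc⁻¹) *
            ((G - G * Vc * (((t : ℂ) * z) • K⁻¹) * Vcᵀ * G) * Sc⁻¹))) := by
          simp only [Matrix.mul_assoc]
      _ = Sc * (((A + z • (Vc * N * Vcᵀ)) *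
            (G - G * Vc * (((t : ℂ) * z) • K⁻¹) * Vcᵀ * G)) * Sc⁻¹) := by
          rw [Matrix.mul_inv_of_invertible, Matrix.one_mul]
          simp only [Matrix.mul_assoc]
      _ = Sc * Sc⁻¹ := by rw [hmain1, Matrix.one_mul]
      _ = 1 := Matrix.mul_inv_of_invertible Sc
  have h2 : (Qc - z • (1 : Matrix (Fin M) (Fin M) ℂ))⁻¹
      = Sc⁻¹ * ((G - G * Vc * (((t : ℂ) * z) • K⁻¹) * Vcᵀ * G) * Sc⁻¹) :=
    Matrix.inv_eq_right_inv h1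
  rw [h2]
  simp only [Matrix.mul_assoc, Matrix.inv_mul_of_invertible, Matrix.mul_one]
  rw [← Matrix.mul_assoc Sc Sc⁻¹, Matrix.mul_inv_of_invertible, Matrix.one_mul]
end
end

section
/- Eigenvalue interlacing under a rank-one multiplicative perturbation: let H be a real symmetric positive semidefinite M×M matrix with eigenvalues λ_1 ≥ … ≥ λ_M, let v ∈ ℝ^M be a unit vector, let t > 0 and d ∈ (−t^{-1}, ∞) with d ≠ 0, set Σ := I_M + t d v vᵀ and Q := Σ^{1/2} H Σ^{1/2}, and let μ_1 ≥ … ≥ μ_M be the eigenvalues of Q. If d > 0, then μ_i ≥ λ_i ≥ μ_{i+1} for all 1 ≤ i ≤ M−1, together with μ_M ≥ λ_M. If d < 0, then λ_i ≥ μ_i ≥ λ_{i+1} for all 1 ≤ i ≤ M−1, together with λ_M ≥ μ_M. -/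
open Matrix

noncomputable section

namespace Stmt13Aux

variable {M : ℕ}

lemma vecMulVec_mulVec_eq (v w x : Fin M → ℝ) :
    vecMulVec v w *ᵥ x = (w ⬝ᵥ x) • v := by
  funext i
  simp only [mulVec, dotProduct, vecMulVec_apply, Pi.smul_apply, smul_eq_mul, Finset.sum_mul]
  exact Finset.sum_congr rfl fun j _ => by ring

lemma dot_self_nonneg (x : Fin M → ℝ) : 0 ≤ x ⬝ᵥ x :=
  Finset.sum_nonneg fun i _ => mul_self_nonneg _

lemma dot_self_pos {x : Fin M → ℝ} (hx : x ≠ 0) : 0 < x ⬝ᵥ x :=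
  lt_of_le_of_ne (dot_self_nonneg x) fun h => hx (dotProduct_self_eq_zero.mp h.symm)

lemma dot_sum_smul {ι : Type*} [Fintype ι] (x : Fin M → ℝ) (g : ι → ℝ) (w : ι → Fin M → ℝ) :
    x ⬝ᵥ (∑ j, g j • w j) = ∑ j, g j * (x ⬝ᵥ w j) := by
  simp only [dotProduct, Finset.sum_apply, Pi.smul_apply, smul_eq_mul, Finset.mul_sum]
  rw [Finset.sum_comm]
  exact Finset.sum_congr rfl fun j _ => Finset.sum_congr rfl fun i _ => by ring

lemma sum_smul_dot {ι : Type*} [Fintype ι] (x : Fin M → ℝ) (g : ι → ℝ) (w : ι → Fin M → ℝ) :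
    (∑ j, g j • w j) ⬝ᵥ x = ∑ j, g j * (w j ⬝ᵥ x) := by
  rw [dotProduct_comm, dot_sum_smul]
  exact Finset.sum_congr rfl fun j _ => by rw [dotProduct_comm]

lemma ortho_dot (e : Fin M → Fin M → ℝ)
    (hon : ∀ i j, e i ⬝ᵥ e j = if i = j then (1:ℝ) else 0)
    (S : Finset (Fin M)) (f g : S → ℝ) :
    (∑ j : S, f j • e ↑j) ⬝ᵥ (∑ j : S, g j • e ↑j) = ∑ j : S, f j * g j := by
  rw [sum_smul_dot]
  refine Finset.sum_congr rfl fun i _ => ?_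
  rw [dot_sum_smul]
  have h : ∀ j : S, g j * (e ↑i ⬝ᵥ e ↑j) = if j = i then g j else 0 := by
    intro j
    rw [hon]
    by_cases hji : j = i
    · subst hji; simp
    · have hne : (↑i : Fin M) ≠ ↑j := fun hc => hji (Subtype.ext hc.symm)
      simp [hne, hji]
  rw [Finset.sum_congr rfl fun j _ => h j, Finset.sum_ite_eq' Finset.univ i g]
  simp

lemma span_form_le (A : Matrix (Fin M) (Fin M) ℝ) (e : Fin M → Fin M → ℝ) (a : Fin M → ℝ)
    (hon : ∀ i j, e i ⬝ᵥ e j = if i = j then (1:ℝ) else 0)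
    (heig : ∀ i, A *ᵥ e i = a i • e i)
    (S : Finset (Fin M)) (c : ℝ) (hc : ∀ j ∈ S, a j ≤ c)
    {x : Fin M → ℝ} (hx : x ∈ Submodule.span ℝ (Set.range fun j : S => e ↑j)) :
    x ⬝ᵥ (A *ᵥ x) ≤ c * (x ⬝ᵥ x) := by
  obtain ⟨g, rfl⟩ := (Submodule.mem_span_range_iff_exists_fun ℝ).mp hx
  have hxA : (A *ᵥ ∑ j : S, g j • e ↑j) = ∑ j : S, (g j * a ↑j) • e ↑j := by
    rw [← Matrix.mulVecLin_apply, map_sum]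
    refine Finset.sum_congr rfl fun j _ => ?_
    rw [_root_.map_smul, Matrix.mulVecLin_apply, heig, smul_smul]
  rw [hxA, ortho_dot e hon, ortho_dot e hon, Finset.mul_sum]
  refine Finset.sum_le_sum fun j _ => ?_
  have := hc ↑j j.2
  nlinarith [mul_self_nonneg (g j)]

lemma span_form_ge (A : Matrix (Fin M) (Fin M) ℝ) (e : Fin M → Fin M → ℝ) (a : Fin M → ℝ)
    (hon : ∀ i j, e i ⬝ᵥ e j = if i = j then (1:ℝ) else 0)
    (heig : ∀ i, A *ᵥ e i = a i • e i)
    (S : Finset (Fin M)) (c : ℝ) (hc : ∀ j ∈ S, c ≤ a j)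
    {x : Fin M → ℝ} (hx : x ∈ Submodule.span ℝ (Set.range fun j : S => e ↑j)) :
    c * (x ⬝ᵥ x) ≤ x ⬝ᵥ (A *ᵥ x) := by
  have h := span_form_le (-A) e (-a) hon
    (fun i => by rw [Matrix.neg_mulVec, heig i]; ext k; simp)
    S (-c) (fun j hj => neg_le_neg (hc j hj)) hx
  rw [Matrix.neg_mulVec, dotProduct_neg] at h
  linarith

lemma span_dim (e : Fin M → Fin M → ℝ)
    (hon : ∀ i j, e i ⬝ᵥ e j = if i = j then (1:ℝ) else 0)
    (S : Finset (Fin M)) :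
    Module.finrank ℝ (Submodule.span ℝ (Set.range fun j : S => e ↑j)) = S.card := by
  have hli : LinearIndependent ℝ e := by
    rw [Fintype.linearIndependent_iff]
    intro g hg i
    have h2 : e i ⬝ᵥ (∑ j, g j • e j) = 0 := by rw [hg]; simp
    rw [dot_sum_smul] at h2
    have h3 : ∀ j, g j * (e i ⬝ᵥ e j) = if i = j then g j else 0 := by
      intro j; rw [hon, mul_ite, mul_one, mul_zero]
    rw [Finset.sum_congr rfl fun j _ => h3 j, Finset.sum_ite_eq Finset.univ i g] at h2
    simpa using h2
  have hli' : LinearIndependent ℝ fun j : S => e ↑j :=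
    hli.comp _ Subtype.val_injective
  rw [finrank_span_eq_card hli', Fintype.card_coe]

lemma interlace_core (Q : Matrix (Fin M) (Fin M) ℝ) (W1 W2 : Submodule ℝ (Fin M → ℝ))
    (hdim : M < Module.finrank ℝ W1 + Module.finrank ℝ W2)
    {c c' : ℝ}
    (h1 : ∀ x ∈ W1, c * (x ⬝ᵥ x) ≤ x ⬝ᵥ (Q *ᵥ x))
    (h2 : ∀ x ∈ W2, x ⬝ᵥ (Q *ᵥ x) ≤ c' * (x ⬝ᵥ x)) : c ≤ c' := by
  have hfull : Module.finrank ℝ (Fin M → ℝ) = M := by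
    simp [Module.finrank_pi]
  have hsup := Submodule.finrank_sup_add_finrank_inf_eq W1 W2
  have hle : Module.finrank ℝ ↥(W1 ⊔ W2) ≤ M := by
    have := Submodule.finrank_le (W1 ⊔ W2)
    omega
  have hpos : 0 < Module.finrank ℝ ↥(W1 ⊓ W2) := by omega
  have hne : (W1 ⊓ W2) ≠ ⊥ := by
    intro h
    rw [h] at hpos
    simp [finrank_bot] at hpos
  obtain ⟨z, hz, hz0⟩ := Submodule.exists_mem_ne_zero_of_ne_bot hne
  have hzz := dot_self_pos hz0
  have ha := h1 z hz.1
  have hb := h2 z hz.2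
  nlinarith

end Stmt13Aux

open Stmt13Aux in
/-- Eigenvalue interlacing under the rank-one multiplicative perturbation
`Q = (1 + t d v vᵀ)^{1/2} H (1 + t d v vᵀ)^{1/2}`. -/
theorem stmt13 (M : ℕ) (hM : 0 < M)
    (H : Matrix (Fin M) (Fin M) ℝ) (hH : H.PosSemidef)
    (lam : Fin M → ℝ) (uvec : Fin M → Fin M → ℝ)
    (hlammono : Antitone lam)
    (huon : ∀ i j, uvec i ⬝ᵥ uvec j = if i = j then (1:ℝ) else 0)
    (heigH : ∀ i, H *ᵥ uvec i = lam i • uvec i)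
    (v : Fin M → ℝ) (hv : v ⬝ᵥ v = 1)
    (t dd : ℝ) (ht : 0 < t) (hdd : -t⁻¹ < dd) (hdd0 : dd ≠ 0)
    (Sq : Matrix (Fin M) (Fin M) ℝ) (hSqpsd : Sq.PosSemidef)
    (hSq : Sq * Sq = 1 + (t * dd) • vecMulVec v v)
    (mu : Fin M → ℝ) (xs : Fin M → Fin M → ℝ)
    (hmumono : Antitone mu)
    (hxson : ∀ i j, xs i ⬝ᵥ xs j = if i = j then (1:ℝ) else 0)
    (heigQ : ∀ i, (Sq * H * Sq) *ᵥ xs i = mu i • xs i) :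
    (0 < dd →
      (∀ i, lam i ≤ mu i) ∧
      (∀ i : Fin M, ∀ h : (i : ℕ) + 1 < M, mu ⟨(i : ℕ) + 1, h⟩ ≤ lam i)) ∧
    (dd < 0 →
      (∀ i, mu i ≤ lam i) ∧
      (∀ i : Fin M, ∀ h : (i : ℕ) + 1 < M, lam ⟨(i : ℕ) + 1, h⟩ ≤ mu i)) := by
  classical
  have htd1 : -1 < t * dd := by
    have h := (mul_lt_mul_iff_right₀ ht).mpr hdd
    rw [mul_neg, mul_inv_cancel₀ (ne_of_gt ht)] at h
    linarith
  set td := t * dd with htddef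
  have htd1' : 0 < 1 + td := by linarith
  have hvne : v ≠ 0 := by
    intro h
    rw [h] at hv
    simp [dotProduct] at hv
  have hrank1 : ∀ x, vecMulVec v v *ᵥ x = (v ⬝ᵥ x) • v := fun x =>
    Stmt13Aux.vecMulVec_mulVec_eq v v x
  have hSqsym : Sqᵀ = Sq := by
    have h := hSqpsd.1
    ext i j
    have h2 := congrFun (congrFun h i) j
    simpa [Matrix.conjTranspose_apply] using h2
  have hswap : ∀ x w, x ⬝ᵥ (Sq *ᵥ w) = (Sq *ᵥ x) ⬝ᵥ w := by
    intro x w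
    rw [dotProduct_mulVec]
    congr 1
    conv_lhs => rw [← hSqsym]
    rw [vecMul_transpose]
  have hSqSq : ∀ x, Sq *ᵥ (Sq *ᵥ x) = x + (td * (v ⬝ᵥ x)) • v := by
    intro x
    rw [mulVec_mulVec, hSq, add_mulVec, one_mulVec, smul_mulVec, hrank1, smul_smul]
  have hnorm : ∀ x, (Sq *ᵥ x) ⬝ᵥ (Sq *ᵥ x) = x ⬝ᵥ x + td * (v ⬝ᵥ x)^2 := by
    intro x
    rw [← hswap x (Sq *ᵥ x), hSqSq, dotProduct_add, dotProduct_smul, smul_eq_mul,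
      dotProduct_comm x v]
    ring
  set s := Real.sqrt (1 + td) with hsdef
  have hs : 0 < s := Real.sqrt_pos.mpr htd1'
  have hs2 : s * s = 1 + td := Real.mul_self_sqrt htd1'.le
  have hpsd : ∀ x, 0 ≤ x ⬝ᵥ (Sq *ᵥ x) := by
    intro x
    simpa using hSqpsd.dotProduct_mulVec_nonneg x
  have hSqv : Sq *ᵥ v = s • v := by
    have hw : Sq *ᵥ (Sq *ᵥ v - s • v) = (-s) • (Sq *ᵥ v - s • v) := by
      rw [mulVec_sub, mulVec_smul, hSqSq, hv]
      ext k
      simp only [Pi.add_apply, Pi.sub_apply, Pi.smul_apply, smul_eq_mul, Pi.neg_apply, mul_one]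
      linear_combination (v k) * hs2.symm
    have h0 : 0 ≤ (Sq *ᵥ v - s • v) ⬝ᵥ (Sq *ᵥ (Sq *ᵥ v - s • v)) := hpsd _
    rw [hw, dotProduct_smul, smul_eq_mul] at h0
    have hww : (Sq *ᵥ v - s • v) ⬝ᵥ (Sq *ᵥ v - s • v) = 0 :=
      le_antisymm (by nlinarith) (Stmt13Aux.dot_self_nonneg _)
    exact sub_eq_zero.mp (dotProduct_self_eq_zero.mp hww)
  have hvSq : ∀ x, v ⬝ᵥ (Sq *ᵥ x) = s * (v ⬝ᵥ x) := by
    intro x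
    rw [hswap, hSqv, smul_dotProduct, smul_eq_mul]
  have hlam0 : ∀ i, 0 ≤ lam i := by
    intro i
    have h1 : uvec i ⬝ᵥ (H *ᵥ uvec i) = lam i := by
      rw [heigH, dotProduct_smul, huon i i, smul_eq_mul]
      simp
    have h2 := hH.dotProduct_mulVec_nonneg (uvec i)
    simp only [star_trivial] at h2
    rw [h1] at h2
    exact h2
  set SqL := Matrix.mulVecLin Sq with hSqLdef
  have hker : LinearMap.ker SqL = ⊥ := by
    rw [LinearMap.ker_eq_bot']
    intro x hx
    rw [hSqLdef, Matrix.mulVecLin_apply] at hx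
    have h2 : Sq *ᵥ (Sq *ᵥ x) = 0 := by rw [hx, mulVec_zero]
    rw [hSqSq] at h2
    have hvx : v ⬝ᵥ x = 0 := by
      have h3 := congrArg (fun w => v ⬝ᵥ w) h2
      simp only [dotProduct_add, dotProduct_smul, smul_eq_mul, dotProduct_zero] at h3
      rw [hv, mul_one] at h3
      have h4 : (1 + td) * (v ⬝ᵥ x) = 0 := by linarith
      exact (mul_eq_zero.mp h4).resolve_left (ne_of_gt htd1')
    rw [hvx, mul_zero, zero_smul, add_zero] at h2
    exact h2
  have hinj : Function.Injective SqL := LinearMap.ker_eq_bot.mp hker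
  have hbij : Function.Bijective SqL := ⟨hinj, LinearMap.injective_iff_surjective.mp hinj⟩
  have hcomapr : ∀ U : Submodule ℝ (Fin M → ℝ),
      Module.finrank ℝ (U.comap SqL) = Module.finrank ℝ U := by
    intro U
    have h1 : U.comap SqL =
        U.comap ((LinearEquiv.ofBijective SqL hbij : (Fin M → ℝ) ≃ₗ[ℝ] (Fin M → ℝ)) :
          (Fin M → ℝ) →ₗ[ℝ] (Fin M → ℝ)) := rfl
    rw [h1, Submodule.comap_equiv_eq_map_symm]
    exact LinearEquiv.finrank_map_eq _ _
  set P := Matrix.mulVecLin (vecMulVec v v) with hPdef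
  set K := LinearMap.ker P with hKdef
  have hKmem : ∀ x, x ∈ K ↔ v ⬝ᵥ x = 0 := by
    intro x
    rw [hKdef, LinearMap.mem_ker, hPdef, Matrix.mulVecLin_apply, hrank1, smul_eq_zero]
    constructor
    · rintro (h | h)
      · exact h
      · exact absurd h hvne
    · exact fun h => Or.inl h
  have hfull : Module.finrank ℝ (Fin M → ℝ) = M := by simp [Module.finrank_pi]
  have hKrank : M ≤ Module.finrank ℝ K + 1 := by
    have hr := LinearMap.finrank_range_add_finrank_ker P
    rw [hfull, ← hKdef] at hr
    have hsub : LinearMap.range P ≤ Submodule.span ℝ {v} := by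
      rintro y ⟨x, rfl⟩
      rw [hPdef, Matrix.mulVecLin_apply, hrank1]
      exact Submodule.smul_mem _ _ (Submodule.mem_span_singleton_self v)
    have h1 : Module.finrank ℝ (LinearMap.range P) ≤ 1 := by
      calc Module.finrank ℝ (LinearMap.range P)
          ≤ Module.finrank ℝ (Submodule.span ℝ {v}) := Submodule.finrank_mono hsub
        _ = 1 := finrank_span_singleton hvne
    omega
  have hinfrank : ∀ A B : Submodule ℝ (Fin M → ℝ),
      Module.finrank ℝ A + Module.finrank ℝ B ≤ M + Module.finrank ℝ ↥(A ⊓ B) := by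
    intro A B
    have h1 := Submodule.finrank_sup_add_finrank_inf_eq A B
    have h2 := Submodule.finrank_le (A ⊔ B)
    omega
  have hQform : ∀ x, x ⬝ᵥ ((Sq * H * Sq) *ᵥ x) = (Sq *ᵥ x) ⬝ᵥ (H *ᵥ (Sq *ᵥ x)) := by
    intro x
    rw [show (Sq * H * Sq) *ᵥ x = Sq *ᵥ (H *ᵥ (Sq *ᵥ x)) by rw [← mulVec_mulVec, ← mulVec_mulVec],
      hswap]
  constructor
  · -- d > 0
    intro hddpos
    have htdpos : 0 < td := mul_pos ht hddpos
    constructor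
    · -- lam i ≤ mu i
      intro i
      refine Stmt13Aux.interlace_core (Sq * H * Sq)
        ((Submodule.span ℝ (Set.range fun j : (Finset.Iic i) => uvec ↑j)).comap SqL)
        (Submodule.span ℝ (Set.range fun j : (Finset.Ici i) => xs ↑j)) ?_ ?_ ?_
      · rw [hcomapr, Stmt13Aux.span_dim uvec huon, Stmt13Aux.span_dim xs hxson,
          Fin.card_Iic, Fin.card_Ici]
        have := i.isLt
        omega
      · intro x hx
        rw [Submodule.mem_comap, hSqLdef, Matrix.mulVecLin_apply] at hx
        have hH1 : lam i * ((Sq *ᵥ x) ⬝ᵥ (Sq *ᵥ x)) ≤ (Sq *ᵥ x) ⬝ᵥ (H *ᵥ (Sq *ᵥ x)) :=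
          Stmt13Aux.span_form_ge H uvec lam huon heigH _ (lam i)
            (fun j hj => hlammono (Finset.mem_Iic.mp hj)) hx
        rw [hQform]
        rw [hnorm] at hH1
        nlinarith [mul_nonneg (hlam0 i) (sq_nonneg (v ⬝ᵥ x)), htdpos]
      · intro x hx
        exact Stmt13Aux.span_form_le _ xs mu hxson heigQ _ (mu i)
          (fun j hj => hmumono (Finset.mem_Ici.mp hj)) hx
    · -- mu (i+1) ≤ lam i
      intro i h
      refine Stmt13Aux.interlace_core (Sq * H * Sq)
        (Submodule.span ℝ (Set.range fun j : (Finset.Iic (⟨(i : ℕ) + 1, h⟩ : Fin M)) => xs ↑j))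
        (((Submodule.span ℝ (Set.range fun j : (Finset.Ici i) => uvec ↑j)) ⊓ K).comap SqL)
        ?_ ?_ ?_
      · rw [hcomapr, Stmt13Aux.span_dim xs hxson, Fin.card_Iic]
        have h2 := hinfrank (Submodule.span ℝ (Set.range fun j : (Finset.Ici i) => uvec ↑j)) K
        rw [Stmt13Aux.span_dim uvec huon, Fin.card_Ici] at h2
        have := i.isLt
        simp only [Fin.val_mk]
        omega
      · intro x hx
        exact Stmt13Aux.span_form_ge _ xs mu hxson heigQ _ _
          (fun j hj => hmumono (Finset.mem_Iic.mp hj)) hx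
      · intro x hx
        rw [Submodule.mem_comap, hSqLdef, Matrix.mulVecLin_apply, Submodule.mem_inf] at hx
        obtain ⟨hx1, hx2⟩ := hx
        have hvx : v ⬝ᵥ x = 0 := by
          have h3 := (hKmem _).mp hx2
          rw [hvSq] at h3
          exact (mul_eq_zero.mp h3).resolve_left (ne_of_gt hs)
        have hH1 : (Sq *ᵥ x) ⬝ᵥ (H *ᵥ (Sq *ᵥ x)) ≤ lam i * ((Sq *ᵥ x) ⬝ᵥ (Sq *ᵥ x)) :=
          Stmt13Aux.span_form_le H uvec lam huon heigH _ (lam i)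
            (fun j hj => hlammono (Finset.mem_Ici.mp hj)) hx1
        rw [hQform]
        rw [hnorm, hvx] at hH1
        nlinarith
  · -- d < 0
    intro hddneg
    have htdneg : td < 0 := mul_neg_of_pos_of_neg ht hddneg
    constructor
    · -- mu i ≤ lam i
      intro i
      refine Stmt13Aux.interlace_core (Sq * H * Sq)
        (Submodule.span ℝ (Set.range fun j : (Finset.Iic i) => xs ↑j))
        ((Submodule.span ℝ (Set.range fun j : (Finset.Ici i) => uvec ↑j)).comap SqL) ?_ ?_ ?_
      · rw [hcomapr, Stmt13Aux.span_dim uvec huon, Stmt13Aux.span_dim xs hxson,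
          Fin.card_Iic, Fin.card_Ici]
        have := i.isLt
        omega
      · intro x hx
        exact Stmt13Aux.span_form_ge _ xs mu hxson heigQ _ (mu i)
          (fun j hj => hmumono (Finset.mem_Iic.mp hj)) hx
      · intro x hx
        rw [Submodule.mem_comap, hSqLdef, Matrix.mulVecLin_apply] at hx
        have hH1 : (Sq *ᵥ x) ⬝ᵥ (H *ᵥ (Sq *ᵥ x)) ≤ lam i * ((Sq *ᵥ x) ⬝ᵥ (Sq *ᵥ x)) :=
          Stmt13Aux.span_form_le H uvec lam huon heigH _ (lam i)
            (fun j hj => hlammono (Finset.mem_Ici.mp hj)) hx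
        rw [hQform]
        rw [hnorm] at hH1
        nlinarith [mul_nonneg (hlam0 i) (sq_nonneg (v ⬝ᵥ x)), htdneg]
    · -- lam (i+1) ≤ mu i
      intro i h
      refine Stmt13Aux.interlace_core (Sq * H * Sq)
        (((Submodule.span ℝ
            (Set.range fun j : (Finset.Iic (⟨(i : ℕ) + 1, h⟩ : Fin M)) => uvec ↑j)) ⊓ K).comap SqL)
        (Submodule.span ℝ (Set.range fun j : (Finset.Ici i) => xs ↑j)) ?_ ?_ ?_
      · rw [hcomapr, Stmt13Aux.span_dim xs hxson, Fin.card_Ici]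
        have h2 := hinfrank (Submodule.span ℝ
          (Set.range fun j : (Finset.Iic (⟨(i : ℕ) + 1, h⟩ : Fin M)) => uvec ↑j)) K
        rw [Stmt13Aux.span_dim uvec huon, Fin.card_Iic] at h2
        have := i.isLt
        simp only [Fin.val_mk] at h2 ⊢
        omega
      · intro x hx
        rw [Submodule.mem_comap, hSqLdef, Matrix.mulVecLin_apply, Submodule.mem_inf] at hx
        obtain ⟨hx1, hx2⟩ := hx
        have hvx : v ⬝ᵥ x = 0 := by
          have h3 := (hKmem _).mp hx2
          rw [hvSq] at h3
          exact (mul_eq_zero.mp h3).resolve_left (ne_of_gt hs)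
        have hH1 : lam ⟨(i : ℕ) + 1, h⟩ * ((Sq *ᵥ x) ⬝ᵥ (Sq *ᵥ x)) ≤
            (Sq *ᵥ x) ⬝ᵥ (H *ᵥ (Sq *ᵥ x)) :=
          Stmt13Aux.span_form_ge H uvec lam huon heigH _ _
            (fun j hj => hlammono (Finset.mem_Iic.mp hj)) hx1
        rw [hQform]
        rw [hnorm, hvx] at hH1
        nlinarith
      · intro x hx
        exact Stmt13Aux.span_form_le _ xs mu hxson heigQ _ (mu i)
          (fun j hj => hmumono (Finset.mem_Ici.mp hj)) hx
end
end

section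
/- Eigenvalue interlacing under a rank-R₀ multiplicative perturbation: let H be a real symmetric positive semidefinite M×M matrix with eigenvalues λ_1 ≥ … ≥ λ_M, and let Σ be a real symmetric positive definite M×M matrix such that Σ − I_M has rank at most R₀. Let μ_1 ≥ … ≥ μ_M be the eigenvalues of Q := Σ^{1/2} H Σ^{1/2}. Then for every i ∈ {1, …, M}: μ_i ≥ 0; μ_i ≤ λ_{i − R₀} whenever i − R₀ ≥ 1; and μ_i ≥ λ_{i + R₀} whenever i + R₀ ≤ M. -/
open Matrix Submodule
noncomputable section
namespace Stmt14Aux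
variable {M : ℕ}

lemma dot_self_nonneg (v : Fin M → ℝ) : 0 ≤ v ⬝ᵥ v :=
  Finset.sum_nonneg fun _ _ => mul_self_nonneg _

lemma sum_dot {ι : Type*} [Fintype ι] (f : ι → Fin M → ℝ) (V : Fin M → ℝ) :
    (∑ j, f j) ⬝ᵥ V = ∑ j, f j ⬝ᵥ V := by
  simp only [dotProduct, Finset.sum_apply, Finset.sum_mul]
  exact Finset.sum_comm

lemma dot_sum {ι : Type*} [Fintype ι] (V : Fin M → ℝ) (f : ι → Fin M → ℝ) :
    V ⬝ᵥ (∑ j, f j) = ∑ j, V ⬝ᵥ f j := by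
  simp only [dotProduct, Finset.sum_apply, Finset.mul_sum]
  exact Finset.sum_comm

lemma dot_sum_sum {ι : Type*} [Fintype ι] [DecidableEq ι] (w : ι → Fin M → ℝ)
    (hw : ∀ i j, w i ⬝ᵥ w j = if i = j then (1:ℝ) else 0) (c b : ι → ℝ) :
    (∑ j, c j • w j) ⬝ᵥ (∑ k, b k • w k) = ∑ j, c j * b j := by
  rw [sum_dot]
  refine Finset.sum_congr rfl fun j _ => ?_
  rw [smul_dotProduct, dot_sum]
  simp only [dotProduct_smul, hw, smul_eq_mul, mul_ite, mul_one, mul_zero]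
  simp [Finset.sum_ite_eq']

lemma quad_bounds (u : Fin M → Fin M → ℝ)
    (hu : ∀ i j, u i ⬝ᵥ u j = if i = j then (1:ℝ) else 0)
    (A : Matrix (Fin M) (Fin M) ℝ) (d : Fin M → ℝ)
    (heig : ∀ i, A *ᵥ u i = d i • u i)
    (s : Finset (Fin M)) (v : Fin M → ℝ)
    (hv : v ∈ span ℝ (Set.range fun j : s => u j)) :
    (∀ a : ℝ, (∀ j ∈ s, a ≤ d j) → a * (v ⬝ᵥ v) ≤ v ⬝ᵥ (A *ᵥ v)) ∧
    (∀ a : ℝ, (∀ j ∈ s, d j ≤ a) → v ⬝ᵥ (A *ᵥ v) ≤ a * (v ⬝ᵥ v)) := by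
  obtain ⟨c, rfl⟩ := (Submodule.mem_span_range_iff_exists_fun ℝ).mp hv
  have hw : ∀ i j : s, u i ⬝ᵥ u j = if i = j then (1:ℝ) else 0 := by
    intro i j; rw [hu]; exact if_congr Subtype.ext_iff.symm rfl rfl
  have hAv : A *ᵥ (∑ j : s, c j • u (j : Fin M)) = ∑ j : s, (c j * d j) • u (j : Fin M) := by
    show A.mulVecLin _ = _
    rw [map_sum]
    refine Finset.sum_congr rfl fun j _ => ?_
    rw [_root_.map_smul, mulVecLin_apply, heig, smul_smul]
  have h1 : (∑ j : s, c j • u (j : Fin M)) ⬝ᵥ (∑ j : s, c j • u (j : Fin M))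
      = ∑ j : s, c j * c j := dot_sum_sum _ hw c c
  have h2 : (∑ j : s, c j • u (j : Fin M)) ⬝ᵥ (A *ᵥ ∑ j : s, c j • u (j : Fin M))
      = ∑ j : s, c j * (c j * d j) := by rw [hAv]; exact dot_sum_sum _ hw _ _
  constructor
  · intro a ha
    rw [h1, h2, Finset.mul_sum]
    refine Finset.sum_le_sum fun j _ => ?_
    have := mul_le_mul_of_nonneg_left (ha j j.2) (mul_self_nonneg (c j))
    calc a * (c j * c j) = (c j * c j) * a := by ring
    _ ≤ (c j * c j) * d j := this
    _ = c j * (c j * d j) := by ring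
  · intro a ha
    rw [h1, h2, Finset.mul_sum]
    refine Finset.sum_le_sum fun j _ => ?_
    have := mul_le_mul_of_nonneg_left (ha j j.2) (mul_self_nonneg (c j))
    calc c j * (c j * d j) = (c j * c j) * d j := by ring
    _ ≤ (c j * c j) * a := this
    _ = a * (c j * c j) := by ring

lemma span_finrank (u : Fin M → Fin M → ℝ)
    (hu : ∀ i j, u i ⬝ᵥ u j = if i = j then (1:ℝ) else 0) (s : Finset (Fin M)) :
    Module.finrank ℝ (span ℝ (Set.range fun j : s => u j)) = s.card := by
  have hli : LinearIndependent ℝ (fun j : s => u j) := by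
    rw [Fintype.linearIndependent_iff]
    intro g hg k
    have := congrArg (fun z => z ⬝ᵥ u (k : Fin M)) hg
    simp only [sum_dot, smul_dotProduct, hu, smul_eq_mul, mul_ite, mul_one, mul_zero,
      zero_dotProduct] at this
    simp only [Subtype.coe_inj] at this
    simpa [Finset.sum_ite_eq'] using this
  rw [finrank_span_eq_card hli, Fintype.card_coe]

lemma sq_fix (S Sq : Matrix (Fin M) (Fin M) ℝ) (hSqpsd : Sq.PosSemidef) (hSq : Sq * Sq = S)
    (v : Fin M → ℝ) (hv : S *ᵥ v = v) : Sq *ᵥ v = v := by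
  set w := Sq *ᵥ v - v with hwdef
  have hvv : Sq *ᵥ (Sq *ᵥ v) = v := by rw [mulVec_mulVec, hSq, hv]
  have h1 : Sq *ᵥ w = -w := by
    rw [hwdef, mulVec_sub, hvv, neg_sub]
  have h2 : 0 ≤ w ⬝ᵥ (Sq *ᵥ w) := by simpa using hSqpsd.dotProduct_mulVec_nonneg w
  rw [h1] at h2
  have h3 : w ⬝ᵥ -w = -(w ⬝ᵥ w) := by simp [dotProduct_neg]
  rw [h3] at h2
  have h4 : w ⬝ᵥ w = 0 := le_antisymm (by linarith) (Finset.sum_nonneg fun _ _ => mul_self_nonneg _)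
  have h5 : w = 0 := dotProduct_self_eq_zero.mp h4
  rw [hwdef] at h5
  exact sub_eq_zero.mp h5

lemma inf_count (U V : Submodule ℝ (Fin M → ℝ)) :
    Module.finrank ℝ U + Module.finrank ℝ V
      ≤ M + Module.finrank ℝ (U ⊓ V : Submodule ℝ (Fin M → ℝ)) := by
  rw [← Submodule.finrank_sup_add_finrank_inf_eq U V]
  have h1 : Module.finrank ℝ (U ⊔ V : Submodule ℝ (Fin M → ℝ)) ≤ M := by
    have h2 := Submodule.finrank_le (U ⊔ V)
    simpa [Module.finrank_pi] using h2
  omega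

lemma exists_ne_zero_of_finrank_pos {P : Submodule ℝ (Fin M → ℝ)}
    (h : 0 < Module.finrank ℝ P) : ∃ v ∈ P, v ≠ 0 := by
  obtain ⟨x, hx⟩ := Module.finrank_pos_iff_exists_ne_zero.mp h
  exact ⟨(x : Fin M → ℝ), x.2, by simpa [Submodule.coe_eq_zero] using hx⟩

end Stmt14Aux

open Stmt14Aux

/-- Eigenvalue interlacing under a rank-`R₀` multiplicative perturbation
`Q = Σ^{1/2} H Σ^{1/2}`. -/
theorem stmt14 (M R₀ : ℕ) (hM : 0 < M)
    (H : Matrix (Fin M) (Fin M) ℝ) (hH : H.PosSemidef)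
    (lam : Fin M → ℝ) (uvec : Fin M → Fin M → ℝ)
    (hlammono : Antitone lam)
    (huon : ∀ i j, uvec i ⬝ᵥ uvec j = if i = j then (1:ℝ) else 0)
    (heigH : ∀ i, H *ᵥ uvec i = lam i • uvec i)
    (S : Matrix (Fin M) (Fin M) ℝ) (hSpos : S.PosDef)
    (hSrank : (S - 1).rank ≤ R₀)
    (Sq : Matrix (Fin M) (Fin M) ℝ) (hSqpsd : Sq.PosSemidef) (hSq : Sq * Sq = S)
    (mu : Fin M → ℝ) (xs : Fin M → Fin M → ℝ)
    (hmumono : Antitone mu)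
    (hxson : ∀ i j, xs i ⬝ᵥ xs j = if i = j then (1:ℝ) else 0)
    (heigQ : ∀ i, (Sq * H * Sq) *ᵥ xs i = mu i • xs i) :
    ∀ i : Fin M,
      0 ≤ mu i ∧
      (∀ _ : R₀ ≤ (i : ℕ),
        mu i ≤ lam ⟨(i : ℕ) - R₀, Nat.lt_of_le_of_lt (Nat.sub_le _ _) i.isLt⟩) ∧
      (∀ h : (i : ℕ) + R₀ < M, lam ⟨(i : ℕ) + R₀, h⟩ ≤ mu i) := by
  have hQpsd : (Sq * H * Sq).PosSemidef := by
    have h2 := hH.mul_mul_conjTranspose_same Sq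
    rwa [hSqpsd.1.eq] at h2
  have hSqT : Sqᵀ = Sq := by
    have h2 := hSqpsd.1.eq
    rwa [conjTranspose_eq_transpose_of_trivial] at h2
  -- kernel of S - 1
  set W : Submodule ℝ (Fin M → ℝ) := LinearMap.ker (S - 1).mulVecLin with hWdef
  have hSr : Module.finrank ℝ (LinearMap.range (S - 1).mulVecLin) ≤ R₀ := hSrank
  have hrn : Module.finrank ℝ (LinearMap.range (S - 1).mulVecLin)
      + Module.finrank ℝ W = M := by
    have h2 := LinearMap.finrank_range_add_finrank_ker ((S - 1).mulVecLin)
    rwa [Module.finrank_pi, Fintype.card_fin] at h2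
  have hfixW : ∀ v ∈ W, Sq *ᵥ v = v := by
    intro v hv
    apply sq_fix S Sq hSqpsd hSq
    have h2 : (S - 1) *ᵥ v = 0 := hv
    rw [sub_mulVec, one_mulVec, sub_eq_zero] at h2
    exact h2
  have hform : ∀ v, Sq *ᵥ v = v → v ⬝ᵥ ((Sq * H * Sq) *ᵥ v) = v ⬝ᵥ (H *ᵥ v) := by
    intro v hfix
    have h2 : (Sq * H * Sq) *ᵥ v = Sq *ᵥ (H *ᵥ v) := by
      rw [← mulVec_mulVec, hfix, ← mulVec_mulVec]
    rw [h2, dotProduct_mulVec, ← mulVec_transpose, hSqT, hfix]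
  intro i
  refine ⟨?_, ?_, ?_⟩
  · -- nonnegativity
    have h2 := hQpsd.dotProduct_mulVec_nonneg (xs i)
    rw [heigQ i] at h2
    have hxi : xs i ⬝ᵥ xs i = 1 := by simpa using hxson i i
    simpa [dotProduct_smul, hxi] using h2
  · -- upper bound
    intro hR
    set kf : Fin M := ⟨(i : ℕ) - R₀, Nat.lt_of_le_of_lt (Nat.sub_le _ _) i.isLt⟩ with hkf
    set sX := Finset.Iic i with hsX
    set sU := Finset.Ici kf with hsU
    set X : Submodule ℝ (Fin M → ℝ) := span ℝ (Set.range fun j : sX => xs j) with hX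
    set U : Submodule ℝ (Fin M → ℝ) := span ℝ (Set.range fun j : sU => uvec j) with hU
    have hXr : Module.finrank ℝ X = (i : ℕ) + 1 := by
      rw [hX, span_finrank xs hxson, hsX, Fin.card_Iic]
    have hUr : Module.finrank ℝ U = M - ((i : ℕ) - R₀) := by
      rw [hU, span_finrank uvec huon, hsU, Fin.card_Ici]
    have c1 := inf_count X U
    have c2 := inf_count (X ⊓ U) W
    have hpos : 0 < Module.finrank ℝ (X ⊓ U ⊓ W : Submodule ℝ (Fin M → ℝ)) := by
      have hiM := i.isLt
      omega
    obtain ⟨v, hv, hvne⟩ := exists_ne_zero_of_finrank_pos hpos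
    have hvX : v ∈ X := hv.1.1
    have hvU : v ∈ U := hv.1.2
    have hvW : v ∈ W := hv.2
    have hn : 0 < v ⬝ᵥ v :=
      lt_of_le_of_ne (dot_self_nonneg v)
        (fun h2 => hvne (dotProduct_self_eq_zero.mp h2.symm))
    have hQb := (quad_bounds xs hxson (Sq * H * Sq) mu heigQ sX v hvX).1 (mu i)
      (fun j hj => hmumono (Finset.mem_Iic.mp hj))
    have hHb := (quad_bounds uvec huon H lam heigH sU v hvU).2 (lam kf)
      (fun j hj => hlammono (Finset.mem_Ici.mp hj))
    have heq := hform v (hfixW v hvW)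
    exact le_of_mul_le_mul_right (by linarith) hn
  · -- lower bound
    intro h
    set kf : Fin M := ⟨(i : ℕ) + R₀, h⟩ with hkf
    set sU := Finset.Iic kf with hsU
    set sX := Finset.Ici i with hsX
    set U : Submodule ℝ (Fin M → ℝ) := span ℝ (Set.range fun j : sU => uvec j) with hU
    set X : Submodule ℝ (Fin M → ℝ) := span ℝ (Set.range fun j : sX => xs j) with hX
    have hUr : Module.finrank ℝ U = (i : ℕ) + R₀ + 1 := by
      rw [hU, span_finrank uvec huon, hsU, Fin.card_Iic]
    have hXr : Module.finrank ℝ X = M - (i : ℕ) := by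
      rw [hX, span_finrank xs hxson, hsX, Fin.card_Ici]
    have c1 := inf_count U X
    have c2 := inf_count (U ⊓ X) W
    have hpos : 0 < Module.finrank ℝ (U ⊓ X ⊓ W : Submodule ℝ (Fin M → ℝ)) := by
      omega
    obtain ⟨v, hv, hvne⟩ := exists_ne_zero_of_finrank_pos hpos
    have hvU : v ∈ U := hv.1.1
    have hvX : v ∈ X := hv.1.2
    have hvW : v ∈ W := hv.2
    have hn : 0 < v ⬝ᵥ v :=
      lt_of_le_of_ne (dot_self_nonneg v)
        (fun h2 => hvne (dotProduct_self_eq_zero.mp h2.symm))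
    have hHb := (quad_bounds uvec huon H lam heigH sU v hvU).1 (lam kf)
      (fun j hj => hlammono (Finset.mem_Iic.mp hj))
    have hQb := (quad_bounds xs hxson (Sq * H * Sq) mu heigQ sX v hvX).2 (mu i)
      (fun j hj => hmumono (Finset.mem_Ici.mp hj))
    have heq := hform v (hfixW v hvW)
    exact le_of_mul_le_mul_right (by linarith) hn
end
end

section
/- There exists a universal constant c ∈ (0, 1] with the following property. Let R be a finite index set, (d_i)_{i∈R} real numbers, and A ⊆ R a nonempty subset such that d_i > 1 for every i ∈ A and d_i ≠ d_j whenever i ∈ A and j ∈ R∖A. For i ∈ A set ν_i := min_{j ∈ R∖A} |d_i − d_j| (with ν_i := +∞ if A = R) and ρ_i := min(ν_i, d_i − 1)/2 > 0. For k ∈ A let Γ_k := {ζ ∈ ℂ : |ζ − d_k| = ρ_k and |ζ − d_l| ≥ ρ_l for every l ∈ A∖{k}}. Then for every k ∈ A, every l ∈ R, and every ζ ∈ Γ_k: c·(ρ_k + |d_k − d_l|) ≤ |ζ − d_l| ≤ ρ_k + |d_k − d_l|. -/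
noncomputable section

/-- The contour radius `ρ_i = min(ν_i, d_i - 1)/2`, where `ν_i` is the distance from `d_i`
to `{d_j : j ∉ A}` (interpreted as `+∞`, i.e. dropped from the minimum, if `A` is everything). -/
def rhoF {ι : Type} [Fintype ι] [DecidableEq ι] (d : ι → ℝ) (A : Finset ι) (i : ι) : ℝ :=
  (min (if hc : Aᶜ.Nonempty then Aᶜ.inf' hc fun j => |d i - d j| else d i - 1) (d i - 1)) / 2

lemma rhoF_pos {ι : Type} [Fintype ι] [DecidableEq ι] (d : ι → ℝ) (A : Finset ι)
    (hd1 : ∀ i ∈ A, 1 < d i) (hne : ∀ i ∈ A, ∀ j ∉ A, d i ≠ d j)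
    {k : ι} (hk : k ∈ A) : 0 < rhoF d A k := by
  unfold rhoF
  have h1 : 0 < d k - 1 := by linarith [hd1 k hk]
  have hmin : 0 < min (if hc : Aᶜ.Nonempty then Aᶜ.inf' hc fun j => |d k - d j| else d k - 1)
      (d k - 1) := by
    refine lt_min ?_ h1
    split_ifs with hc
    · rw [Finset.lt_inf'_iff]
      intro j hj
      exact abs_pos.mpr (sub_ne_zero.mpr (hne k hk j (Finset.mem_compl.mp hj)))
    · exact h1
  linarith

/-- Lipschitz-type lower bound: `ρ_l ≥ ρ_k - |d_k - d_l|/2`. -/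
lemma rhoF_lip {ι : Type} [Fintype ι] [DecidableEq ι] (d : ι → ℝ) (A : Finset ι) (k l : ι) :
    rhoF d A k - |d k - d l| / 2 ≤ rhoF d A l := by
  unfold rhoF
  have hkl : d k - d l ≤ |d k - d l| := le_abs_self _
  have key : min (if hc : Aᶜ.Nonempty then Aᶜ.inf' hc fun j => |d k - d j| else d k - 1)
      (d k - 1) - |d k - d l| ≤
      min (if hc : Aᶜ.Nonempty then Aᶜ.inf' hc fun j => |d l - d j| else d l - 1)
      (d l - 1) := by
    refine le_min ?_ ?_
    · split_ifs with hc
      · rw [Finset.le_inf'_iff]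
        intro j hj
        have h1 : (Aᶜ.inf' hc fun j => |d k - d j|) ≤ |d k - d j| :=
          Finset.inf'_le _ hj
        have h2 : |d k - d j| ≤ |d k - d l| + |d l - d j| := abs_sub_le _ _ _
        have h3 : min (Aᶜ.inf' hc fun j => |d k - d j|) (d k - 1) ≤
            Aᶜ.inf' hc fun j => |d k - d j| := min_le_left _ _
        linarith
      · have h3 : min (d k - 1) (d k - 1) ≤ d k - 1 := min_le_left _ _
        linarith
    · have h3 : min (if hc : Aᶜ.Nonempty then Aᶜ.inf' hc fun j => |d k - d j| else d k - 1)
          (d k - 1) ≤ d k - 1 := min_le_right _ _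
      linarith
  linarith

/-- If `l ∉ A` then `2 ρ_k ≤ |d_k - d_l|`. -/
lemma rhoF_le_of_not_mem {ι : Type} [Fintype ι] [DecidableEq ι] (d : ι → ℝ) (A : Finset ι)
    (k : ι) {l : ι} (hl : l ∉ A) : 2 * rhoF d A k ≤ |d k - d l| := by
  have hc : Aᶜ.Nonempty := ⟨l, Finset.mem_compl.mpr hl⟩
  unfold rhoF
  rw [dif_pos hc]
  have h1 : (Aᶜ.inf' hc fun j => |d k - d j|) ≤ |d k - d l| :=
    Finset.inf'_le _ (Finset.mem_compl.mpr hl)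
  have h2 : min (Aᶜ.inf' hc fun j => |d k - d j|) (d k - 1) ≤
      Aᶜ.inf' hc fun j => |d k - d j| := min_le_left _ _
  linarith

/-- On the contour piece `Γ_k` one has `|ζ - d_l| ≍ ρ_k + |d_k - d_l|`,
with an absolute constant. -/
theorem stmt15 :
    ∃ c : ℝ, 0 < c ∧ c ≤ 1 ∧
      ∀ (ι : Type) [Fintype ι] [DecidableEq ι] (d : ι → ℝ) (A : Finset ι),
        A.Nonempty →
        (∀ i ∈ A, 1 < d i) →
        (∀ i ∈ A, ∀ j ∉ A, d i ≠ d j) →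
        ∀ k ∈ A, ∀ l : ι, ∀ ζ : ℂ,
          (‖ζ - (d k : ℂ)‖ = rhoF d A k ∧
            ∀ l' ∈ A, l' ≠ k → rhoF d A l' ≤ ‖ζ - (d l' : ℂ)‖) →
          c * (rhoF d A k + |d k - d l|) ≤ ‖ζ - (d l : ℂ)‖ ∧
          ‖ζ - (d l : ℂ)‖ ≤ rhoF d A k + |d k - d l| := by
  refine ⟨1/9, by norm_num, by norm_num, ?_⟩
  intro ι _ _ d A _hA hd1 hne k hk l ζ ⟨hζk, hζ⟩
  have hr : 0 < rhoF d A k := rhoF_pos d A hd1 hne hk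
  set r := rhoF d A k with hrdef
  set u := ‖ζ - (d l : ℂ)‖ with hudef
  set t := |d k - d l| with htdef
  have ht0 : 0 ≤ t := abs_nonneg _
  have hcast : ‖(d k : ℂ) - (d l : ℂ)‖ = t := by
    rw [← Complex.ofReal_sub, Complex.norm_real, Real.norm_eq_abs]
  -- triangle inequalities
  have tri1 : u ≤ r + t := by
    have h := norm_sub_le_norm_sub_add_norm_sub ζ ((d k : ℂ)) ((d l : ℂ))
    rw [hζk, hcast] at h
    exact h
  have tri2 : t - r ≤ u := by
    have h := norm_sub_le_norm_sub_add_norm_sub ((d k : ℂ)) ζ ((d l : ℂ))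
    rw [norm_sub_rev (d k : ℂ) ζ, hζk, hcast] at h
    linarith
  refine ⟨?_, tri1⟩
  by_cases h2 : 2 * r ≤ t
  · -- far case
    linarith
  · -- near case: l must be in A
    push_neg at h2
    have hlA : l ∈ A := by
      by_contra hl
      have := rhoF_le_of_not_mem d A k hl
      linarith
    by_cases hlk : l = k
    · subst hlk
      have ht : t = 0 := by simp [htdef]
      have hu : u = r := hζk
      linarith
    · have hρl : rhoF d A l ≤ u := hζ l hlA hlk
      have hlip : r - t / 2 ≤ rhoF d A l := rhoF_lip d A k l
      linarith
end
end
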